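/- For a positive integer N, the CDF of a gamma(N,1) random variable is bounded below: for all y ≥ 0, γ(N, y)/Γ(N) ≥ (1 - e^{-κ y})^N, where κ = (N!)^{-1/N}. -/

import Mathlib

/-!
Write `N = n + 1` and let `f(x) = γ(N, x)/n! - (1 - e^{-κx})^N` (`alzerGap n κ`). Both terms
vanish at `0` and tend to `1` at `∞`, so it suffices that `f'` is first nonnegative and then
nonpositive. Since `κ^N N! = 1`, with `u = κx` one finds
`f'(x) = xⁿ e^{-x}/n! · (1 - e^{-H(u)})`, where `H(u) = (N - 1/κ) u - n K(u)` (`alzerExponent`)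
and `K(u) = log ((eᵘ - 1)/u)` (`uniformCgf`) is the cumulant generating function of the
uniform distribution on `[0, 1]`. Cumulant generating functions are convex, so `H` is concave
with `H(0) = 0`; hence `{u ≥ 0 | 0 ≤ H u}` is an interval starting at `0`, which is the
required sign pattern.
-/

open MeasureTheory Real Set Filter Topology ProbabilityTheory
open scoped Nat

theorem nonneg_of_hasDerivAt_of_sign_change {f f' : ℝ → ℝ} {a y : ℝ}
    (hcont : ContinuousOn f (Ici a)) (hderiv : ∀ x ∈ Ioi a, HasDerivAt f (f' x) x)
    (hsign : ∀ x z, a < x → x ≤ z → 0 ≤ f' z → 0 ≤ f' x)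
    (ha : f a = 0) (htop : Tendsto f atTop (𝓝 0)) (hy : a ≤ y) : 0 ≤ f y := by
  by_cases hinc : ∀ x ∈ Ioo a y, 0 ≤ f' x
  · have hmono : MonotoneOn f (Icc a y) := by
      refine monotoneOn_of_hasDerivWithinAt_nonneg (convex_Icc a y)
        (hcont.mono Icc_subset_Ici_self) (fun x hx => ?_) (by rwa [interior_Icc])
      rw [interior_Icc] at hx
      exact (hderiv x hx.1).hasDerivWithinAt
    simpa [ha] using hmono (left_mem_Icc.2 hy) (right_mem_Icc.2 hy) hy
  · push Not at hinc
    obtain ⟨w, ⟨haw, hwy⟩, hw⟩ := hinc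
    have hanti : AntitoneOn f (Ici y) := by
      refine antitoneOn_of_hasDerivWithinAt_nonpos (f' := f') (convex_Ici y)
        (hcont.mono (Ici_subset_Ici.2 hy)) (fun x hx => ?_) (fun x hx => ?_) <;>
        rw [interior_Ici] at hx
      · exact (hderiv x (haw.trans (hwy.trans hx))).hasDerivWithinAt
      · by_contra! hx'
        exact hw.not_ge (hsign w x haw (hwy.trans hx).le hx'.le)
    exact le_of_tendsto htop (eventually_atTop.2 ⟨y, fun z hz => hanti self_mem_Ici hz hz⟩)

theorem ProbabilityTheory.convexOn_cgf {Ω : Type*} {m : MeasurableSpace Ω} {X : Ω → ℝ}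
    {μ : Measure Ω} : ConvexOn ℝ (interior (integrableExpSet X μ)) (cgf X μ) := by
  refine convexOn_of_deriv2_nonneg' convex_integrableExpSet.interior
    analyticOnNhd_cgf.differentiableOn analyticOnNhd_cgf.deriv.differentiableOn fun v hv => ?_
  rw [← iteratedDeriv_eq_iterate, iteratedDeriv_two_cgf_eq_integral hv]
  exact div_nonneg (integral_nonneg fun ω => by positivity) mgf_nonneg

lemma integrableExpSet_id_restrict_Icc (a b : ℝ) :
    integrableExpSet id (volume.restrict (Icc a b)) = univ :=
  eq_univ_of_forall fun _ =>
    (continuous_exp.comp (continuous_const.mul continuous_id)).integrableOn_Icc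

lemma mgf_id_restrict_Icc_zero_one {u : ℝ} (hu : u ≠ 0) :
    mgf id (volume.restrict (Icc (0 : ℝ) 1)) u = (exp u - 1) / u := by
  rw [mgf, integral_Icc_eq_integral_Ioc, ← intervalIntegral.integral_of_le zero_le_one]
  simp only [id, intervalIntegral.integral_comp_mul_left (fun x => exp x) hu, integral_exp,
    mul_zero, mul_one, exp_zero, smul_eq_mul]
  field_simp

noncomputable def uniformCgf : ℝ → ℝ := cgf id (volume.restrict (Icc (0 : ℝ) 1))

lemma convexOn_uniformCgf : ConvexOn ℝ univ uniformCgf := by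
  have h := convexOn_cgf (X := id) (μ := volume.restrict (Icc (0 : ℝ) 1))
  rwa [integrableExpSet_id_restrict_Icc, interior_univ] at h

lemma uniformCgf_zero : uniformCgf 0 = 0 := by
  simp [uniformCgf, cgf_zero']

lemma one_sub_exp_neg_eq_mul_exp_uniformCgf {u : ℝ} (hu : 0 < u) :
    1 - exp (-u) = u * exp (uniformCgf u - u) := by
  have hexp : exp (uniformCgf u) = (exp u - 1) / u := by
    rw [uniformCgf, cgf, mgf_id_restrict_Icc_zero_one hu.ne', exp_log]
    exact div_pos (by linarith [add_one_lt_exp hu.ne']) hu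
  rw [exp_sub, hexp, exp_neg]
  field_simp

lemma hasDerivAt_integral_pow_mul_exp_neg (n : ℕ) (x : ℝ) :
    HasDerivAt (fun x => ∫ t in 0..x, t ^ n * exp (-t)) (x ^ n * exp (-x)) x :=
  ((continuous_pow n).mul (continuous_exp.comp continuous_neg)).integral_hasStrictDerivAt
    0 x |>.hasDerivAt

lemma tendsto_integral_pow_mul_exp_neg_atTop (n : ℕ) :
    Tendsto (fun x => ∫ t in 0..x, t ^ n * exp (-t)) atTop (𝓝 (n ! : ℝ)) := by
  have hpow : ∀ t : ℝ, exp (-t) * t ^ ((n + 1 : ℝ) - 1) = t ^ n * exp (-t) := fun t => by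
    rw [add_sub_cancel_right, rpow_natCast, mul_comm]
  have hpos : (0 : ℝ) < n + 1 := by positivity
  have hint := GammaIntegral_convergent hpos
  have hval := Gamma_eq_integral hpos
  simp only [hpow] at hint hval
  rw [← Gamma_nat_eq_factorial, hval]
  exact intervalIntegral_tendsto_integral_Ioi 0 hint tendsto_id

lemma hasDerivAt_one_sub_exp_neg_mul_pow (n : ℕ) (k x : ℝ) :
    HasDerivAt (fun x => (1 - exp (-(k * x))) ^ (n + 1))
      ((n + 1) * (1 - exp (-(k * x))) ^ n * (k * exp (-(k * x)))) x := by
  have h := (((hasDerivAt_id x).const_mul k).fun_neg.exp.const_sub 1).fun_pow (n + 1)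
  refine h.congr_deriv ?_
  simp only [id, Nat.cast_add, Nat.cast_one, add_tsub_cancel_right]
  ring

section Alzer

variable {n : ℕ} {k : ℝ}

noncomputable def alzerExponent (n : ℕ) (k u : ℝ) : ℝ :=
  ((n + 1 : ℝ) - k⁻¹) * u - n * uniformCgf u

lemma concaveOn_alzerExponent : ConcaveOn ℝ univ (alzerExponent n k) := by
  have hlin : ConcaveOn ℝ univ fun u : ℝ => ((n + 1 : ℝ) - k⁻¹) * u :=
    (LinearMap.mulLeft ℝ ((n + 1 : ℝ) - k⁻¹)).concaveOn convex_univ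
  exact hlin.sub (convexOn_uniformCgf.smul (Nat.cast_nonneg n))

lemma alzerExponent_zero : alzerExponent n k 0 = 0 := by
  simp [alzerExponent, uniformCgf_zero]

lemma alzerExponent_nonneg_of_le {w z : ℝ} (hw : 0 ≤ w) (hwz : w ≤ z)
    (hz : 0 ≤ alzerExponent n k z) : 0 ≤ alzerExponent n k w := by
  have hconv := (concaveOn_alzerExponent (n := n) (k := k)).convex_ge 0
  exact (hconv.ordConnected.out ⟨mem_univ 0, alzerExponent_zero.ge⟩ ⟨mem_univ z, hz⟩
    ⟨hw, hwz⟩).2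

noncomputable def alzerGap (n : ℕ) (k x : ℝ) : ℝ :=
  (∫ t in 0..x, t ^ n * exp (-t)) / (n ! : ℝ) - (1 - exp (-(k * x))) ^ (n + 1)

lemma hasDerivAt_alzerGap (hk : 0 < k) (hkn : k ^ (n + 1) = ((n + 1)! : ℝ)⁻¹) {x : ℝ}
    (hx : 0 < x) : HasDerivAt (alzerGap n k)
      (x ^ n * exp (-x) / n ! * (1 - exp (-alzerExponent n k (k * x)))) x := by
  refine (((hasDerivAt_integral_pow_mul_exp_neg n x).div_const _).sub
    (hasDerivAt_one_sub_exp_neg_mul_pow n k x)).congr_deriv ?_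
  have hfac : (n + 1 : ℝ) * k ^ (n + 1) = (n ! : ℝ)⁻¹ := by
    rw [hkn, Nat.factorial_succ]
    push_cast
    field_simp
  have hexp : exp (uniformCgf (k * x) - k * x) ^ n * exp (-(k * x)) =
      exp (-x) * exp (-alzerExponent n k (k * x)) := by
    rw [← exp_nat_mul, ← exp_add, ← exp_add, alzerExponent]
    congr 1
    field_simp
    ring
  calc x ^ n * exp (-x) / (n ! : ℝ) - (n + 1) * (1 - exp (-(k * x))) ^ n * (k * exp (-(k * x)))
      = x ^ n * exp (-x) / (n ! : ℝ) - (n + 1) * k ^ (n + 1) * x ^ n *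
          (exp (uniformCgf (k * x) - k * x) ^ n * exp (-(k * x))) := by
        rw [one_sub_exp_neg_eq_mul_exp_uniformCgf (mul_pos hk hx)]
        ring
    _ = _ := by
        rw [hfac, hexp]
        ring

lemma continuous_alzerGap : Continuous (alzerGap n k) :=
  ((continuous_iff_continuousAt.2 fun x =>
    (hasDerivAt_integral_pow_mul_exp_neg n x).continuousAt).div_const _).sub (by fun_prop)

lemma alzerGap_zero : alzerGap n k 0 = 0 := by
  simp [alzerGap]

lemma tendsto_alzerGap_atTop (hk : 0 < k) : Tendsto (alzerGap n k) atTop (𝓝 0) := by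
  have hF := (tendsto_integral_pow_mul_exp_neg_atTop n).div_const (n ! : ℝ)
  have hG : Tendsto (fun x => (1 - exp (-(k * x))) ^ (n + 1)) atTop (𝓝 1) := by
    have h := tendsto_exp_atBot.comp (tendsto_neg_atTop_atBot.comp (tendsto_id.const_mul_atTop hk))
    simpa using (h.const_sub 1).pow (n + 1)
  have h := hF.sub hG
  rw [div_self (Nat.cast_ne_zero.2 n.factorial_ne_zero), sub_self] at h
  exact h

theorem one_sub_exp_neg_mul_pow_le_integral (hk : 0 < k)
    (hkn : k ^ (n + 1) = ((n + 1)! : ℝ)⁻¹) {y : ℝ} (hy : 0 ≤ y) :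
    (1 - exp (-(k * y))) ^ (n + 1) ≤ (∫ t in 0..y, t ^ n * exp (-t)) / n ! := by
  have hsign : ∀ x > 0, 0 ≤ x ^ n * exp (-x) / n ! * (1 - exp (-alzerExponent n k (k * x))) ↔
      0 ≤ alzerExponent n k (k * x) := fun x hx => by
    rw [mul_nonneg_iff_of_pos_left (by positivity), sub_nonneg, exp_le_one_iff, neg_nonpos]
  refine sub_nonneg.1 (nonneg_of_hasDerivAt_of_sign_change (f := alzerGap n k)
    continuous_alzerGap.continuousOn (fun x hx => hasDerivAt_alzerGap hk hkn hx)
    (fun x z hx hxz hz => ?_) alzerGap_zero (tendsto_alzerGap_atTop hk) hy)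
  rw [hsign x hx]
  rw [hsign z (hx.trans_le hxz)] at hz
  exact alzerExponent_nonneg_of_le (by positivity) (by gcongr) hz

end Alzer

/-- Alzer's inequality: for a positive integer `N`, the CDF of a gamma(N,1) random
variable, `γ(N, y)/Γ(N)` with `γ(N,y) = ∫_0^y t^{N-1} e^{-t} dt`, is bounded below by
`(1 - e^{-κ y})^N` for all `y ≥ 0`, where `κ = (N!)^{-1/N}`. -/
theorem lower_incomplete_gamma_cdf_ge (N : ℕ) (hN : 0 < N) (y : ℝ) (hy : 0 ≤ y) :
    (∫ t in Set.Ioc 0 y, t ^ ((N : ℝ) - 1) * Real.exp (-t)) / (N - 1).factorial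
      ≥ (1 - Real.exp (-((N.factorial : ℝ) ^ (-(1 : ℝ) / N) * y))) ^ N := by
  obtain ⟨n, rfl⟩ := Nat.exists_eq_add_one.2 hN
  have hfac : (0 : ℝ) ≤ ((n + 1)! : ℝ) := by positivity
  set κ : ℝ := ((n + 1)! : ℝ) ^ (-(1 : ℝ) / (n + 1 : ℕ)) with hκ_def
  have hκ : 0 < κ := by positivity
  have hκn : κ ^ (n + 1) = ((n + 1)! : ℝ)⁻¹ := by
    rw [hκ_def, neg_div, one_div, rpow_neg hfac, inv_pow,
      rpow_inv_natCast_pow hfac n.succ_ne_zero]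
  have hint : ∫ t in Ioc 0 y, t ^ (((n + 1 : ℕ) : ℝ) - 1) * exp (-t) =
      ∫ t in 0..y, t ^ n * exp (-t) := by
    rw [intervalIntegral.integral_of_le hy]
    push_cast
    simp only [add_sub_cancel_right, rpow_natCast]
  rw [ge_iff_le, hint, Nat.add_sub_cancel]
  exact one_sub_exp_neg_mul_pow_le_integral hκ hκn hy
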